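/- arXiv:1201.4715 — 2 statements merged into one kernel-verified Lean document; each statement's English description precedes it below -/
import Mathlib

section
/- Let u be a node of a symbolic execution tree with state (l_e, θ_u, φ_u) at the loop entry, let θ describe one iteration of the loop core and φ its iteration condition, and let (l_x, θ̂, φ̂) describe the exit path. If w is the node reached from u by executing ν iterations of the core followed by the exit path, then w.θ = θ_u ⋄ (θ^ν ⋄ θ̂) and w.φ ≡ φ_u ∧ θ_u⟨0 ≤ ν ∧ ∀τ(0 ≤ τ < ν → θ^τ⟨φ⟩) ∧ θ^ν⟨φ̂⟩⟩. -/
/-- A program state: location, symbolic memory, path condition. -/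
structure PState (Loc Var : Type) where
  loc : Loc
  mem : (Var → ℤ) → (Var → ℤ)
  pc  : (Var → ℤ) → Prop

/-- State composition `s₁ ⋄ s₂ = (l₂, θ₁ ⋄ θ₂, φ₁ ∧ θ₁⟨φ₂⟩)`. -/
def scomp {Loc Var : Type} (s₁ s₂ : PState Loc Var) : PState Loc Var :=
  ⟨s₂.loc, fun v => s₂.mem (s₁.mem v), fun v => s₁.pc v ∧ s₂.pc (s₁.mem v)⟩

/-- The node reached from `u` by `i` executions of the iteration state `it`. -/
def iterState {Loc Var : Type} (u it : PState Loc Var) : ℕ → PState Loc Var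
  | 0 => u
  | n + 1 => scomp (iterState u it n) it

section

variable {Loc Var : Type}

@[simp]
lemma scomp_mem (s₁ s₂ : PState Loc Var) (v : Var → ℤ) :
    (scomp s₁ s₂).mem v = s₂.mem (s₁.mem v) := rfl

@[simp]
lemma scomp_pc (s₁ s₂ : PState Loc Var) (v : Var → ℤ) :
    (scomp s₁ s₂).pc v ↔ s₁.pc v ∧ s₂.pc (s₁.mem v) := Iff.rfl

lemma iterState_mem (u it : PState Loc Var) (n : ℕ) (v : Var → ℤ) :
    (iterState u it n).mem v = it.mem^[n] (u.mem v) := by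
  induction n with
  | zero => rfl
  | succ n ih => rw [iterState, scomp_mem, ih, Function.iterate_succ_apply']

lemma iterState_pc (u it : PState Loc Var) (n : ℕ) (v : Var → ℤ) :
    (iterState u it n).pc v ↔ u.pc v ∧ ∀ τ < n, it.pc (it.mem^[τ] (u.mem v)) := by
  induction n with
  | zero => simp [iterState]
  | succ n ih =>
    rw [iterState, scomp_pc, ih, iterState_mem, Nat.forall_lt_succ_right, and_assoc]

end

/-- If `w` is reached from `u = (l_e, θ_u, φ_u)` by `ν` iterations of the core
`(l_e, θ, φ)` followed by the exit `(l_x, θ̂, φ̂)`, then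
`w.θ = θ_u ⋄ (θ^ν ⋄ θ̂)` and
`w.φ ≡ φ_u ∧ θ_u⟨0 ≤ ν ∧ ∀τ(0 ≤ τ < ν → θ^τ⟨φ⟩) ∧ θ^ν⟨φ̂⟩⟩`. -/
theorem loop_exit_state {Loc Var : Type} (le lx : Loc)
    (θu θ θhat : (Var → ℤ) → (Var → ℤ))
    (φu φ φhat : (Var → ℤ) → Prop) (ν : ℕ) :
    let u : PState Loc Var := ⟨le, θu, φu⟩
    let w : PState Loc Var := scomp (iterState u ⟨le, θ, φ⟩ ν) ⟨lx, θhat, φhat⟩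
    (∀ v, w.mem v = θhat ((θ^[ν]) (θu v))) ∧
    (∀ v, w.pc v ↔ φu v ∧
      ((0 ≤ ν ∧ ∀ τ, τ < ν → φ ((θ^[τ]) (θu v))) ∧ φhat ((θ^[ν]) (θu v)))) := by
  refine ⟨fun v => ?_, fun v => ?_⟩
  · rw [scomp_mem, iterState_mem]
  · simp only [scomp_pc, iterState_pc, iterState_mem, Nat.zero_le, true_and, and_assoc]
end

section
/- Correctness of the ite-rule for dependent variables: suppose θ(a) = g where g is a symbolic expression all of whose symbols 𝔟 satisfy that θ_*[κ](b) has already been correctly defined (θ_*[κ](b) ≡ θ^κ(b) for all κ ≥ 0). If one defines θ_*[κ](a) = ite(κ > 0, θ_*[κ−1]⟨g⟩, 𝔞), then θ_*[κ](a) ≡ θ^κ(a) for all κ ≥ 0. -/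
/-- Correctness of the ite-rule for dependent variables: if `θ(a) = g`, where
`g` depends only on variables in `S` and `θ_*[κ]` agrees with `θ^κ` on all
variables of `S`, and `θ_*[κ](a) = ite(κ > 0, θ_*[κ−1]⟨g⟩, 𝔞)`, then
`θ_*[κ](a) ≡ θ^κ(a)` for all `κ ≥ 0`. -/
theorem ite_rule_correct {Var : Type} (θ : (Var → ℤ) → (Var → ℤ)) (a : Var)
    (S : Set Var) (g : (Var → ℤ) → ℤ)
    (hg : ∀ v w : Var → ℤ, (∀ b ∈ S, v b = w b) → g v = g w)
    (ha : ∀ v, θ v a = g v)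
    (θstar : ℕ → (Var → ℤ) → (Var → ℤ))
    (hb : ∀ b ∈ S, ∀ (κ : ℕ) (v : Var → ℤ), θstar κ v b = (θ^[κ]) v b)
    (hdef : ∀ (κ : ℕ) (v : Var → ℤ),
      θstar κ v a = if 0 < κ then g (θstar (κ - 1) v) else v a) :
    ∀ (κ : ℕ) (v : Var → ℤ), θstar κ v a = (θ^[κ]) v a := by
  rintro (_ | κ) v
  · simp [hdef]
  · calc θstar (κ + 1) v a = g (θstar κ v) := by simp [hdef]
      _ = g (θ^[κ] v) := hg _ _ fun b hbS => hb b hbS κ v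
      _ = θ (θ^[κ] v) a := (ha _).symm
      _ = θ^[κ + 1] v a := by rw [Function.iterate_succ_apply']
end
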